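/- Let F be a field, let m ≥ 2, and let c and j' be nonnegative integers with (m−1)·j' < m·c. Let R ∈ F[X_1,...,X_m] be a homogeneous polynomial of degree j'. Suppose B is a set of m linearly independent vectors in F^m such that R vanishes with multiplicity at least c at every b ∈ B. Then R = 0. -/

import Mathlib

/-- The Hasse derivative of a multivariate polynomial `P` with respect to the index
vector `i : Fin m → ℕ`: the coefficient of `Z^i` in `P(X + Z)`. -/
noncomputable def mvHasseDeriv {F : Type*} [CommSemiring F] {m : ℕ}
    (i : Fin m → ℕ) (P : MvPolynomial (Fin m) F) : MvPolynomial (Fin m) F :=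
  MvPolynomial.coeff (Finsupp.equivFunOnFinite.symm i)
    (MvPolynomial.eval₂ (MvPolynomial.C.comp MvPolynomial.C)
      (fun k => MvPolynomial.C (MvPolynomial.X k) + MvPolynomial.X k) P)

/-- The multiplicity of `P` at a point `a`: the largest `M` (possibly `⊤`) such that
all Hasse derivatives of `P` of weight `< M` vanish at `a`. -/
noncomputable def mvMult {F : Type*} [CommSemiring F] {m : ℕ}
    (P : MvPolynomial (Fin m) F) (a : Fin m → F) : ℕ∞ :=
  sSup {M : ℕ∞ | ∀ i : Fin m → ℕ, ((∑ k, i k : ℕ) : ℕ∞) < M →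
    MvPolynomial.eval a (mvHasseDeriv i P) = 0}

/-!
Move the basis `b` to the standard basis: substituting the linear forms `∑ₗ b l j X_l` for the
`X_j` is invertible, preserves homogeneity, and turns vanishing to order `c` at `b k` into vanishing
to order `c` at the unit vector `e_k`. Now let `S` be homogeneous of degree `n` and vanish to order
`c` at every `e_k`. Its dehomogenization `S(X)|_{X_k = 1} = S(X + e_k)|_{X_k = 0}` still vanishes to
order `c` at the origin, and by homogeneity it keeps the coefficient of each monomial `X^ν` of `S`,
now at `X^ν / X_k^{ν_k}`. Hence `c + ν_k ≤ n` for every `k`; summing over `k` gives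
`m c + n ≤ m n`, which contradicts `(m - 1) n < m c` unless `S = 0`.
-/

open scoped Matrix

lemma Finsupp.degree_erase_add {σ : Type*} (ν : σ →₀ ℕ) (k : σ) :
    (ν.erase k).degree + ν k = ν.degree := by
  rw [← Finsupp.degree_single k (ν k), ← map_add, Finsupp.erase_add_single]

namespace MvPolynomial

variable {σ τ R : Type*} [CommSemiring R]

noncomputable def shift (a : σ → R) : MvPolynomial σ R →ₐ[R] MvPolynomial σ R :=
  aeval fun j => X j + C (a j)

lemma le_order_aeval {g : σ → MvPolynomial τ R} (hg : ∀ i, (g i).IsHomogeneous 1)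
    (p : MvPolynomial σ R) :
    (p : MvPowerSeries σ R).order ≤ (aeval g p : MvPowerSeries τ R).order := by
  refine MvPowerSeries.le_order fun d hd => ?_
  rw [coeff_coe, ← sum_homogeneousComponent p, map_sum, coeff_sum]
  refine Finset.sum_eq_zero fun t _ => ?_
  obtain ht | ht := lt_or_ge (t : ℕ∞) (p : MvPowerSeries σ R).order
  · have hpt : homogeneousComponent t p = 0 := by
      ext e
      rw [coeff_homogeneousComponent, coeff_zero]
      split_ifs with he
      · rw [← coeff_coe]
        exact MvPowerSeries.coeff_of_lt_order (he ▸ ht)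
      · rfl
    rw [hpt, map_zero, coeff_zero]
  · have hdt : d.degree ≠ t := by
      rintro rfl
      exact (hd.trans_le ht).false
    simpa using ((homogeneousComponent_isHomogeneous t p).aeval g hg).coeff_eq_zero
      (by simpa using hdt)

section LinearSubstitution

variable [Fintype σ]

lemma bind₁_toMvPolynomial_shift (A : Matrix σ σ R) (a : σ → R) (p : MvPolynomial σ R) :
    bind₁ A.toMvPolynomial (shift (A *ᵥ a) p) = shift a (bind₁ A.toMvPolynomial p) := by
  rw [← AlgHom.comp_apply, ← AlgHom.comp_apply]
  congr 1
  ext j : 1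
  simp [shift, Matrix.toMvPolynomial, Matrix.mulVec, dotProduct, ← C_mul_X_eq_monomial,
    mul_add, Finset.sum_add_distrib]

lemma bind₁_toMvPolynomial_injective [DecidableEq σ] {A : Matrix σ σ R} (hA : IsUnit A) :
    Function.Injective (bind₁ A.toMvPolynomial) := by
  obtain ⟨B, hB⟩ := hA.exists_right_inv
  refine Function.LeftInverse.injective (g := bind₁ B.toMvPolynomial) fun p => ?_
  simp only [bind₁_bind₁, ← Matrix.toMvPolynomial_mul, hB, Matrix.toMvPolynomial_one,
    bind₁_X_left, AlgHom.id_apply]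

end LinearSubstitution

section Dehomogenization

variable [DecidableEq σ]

noncomputable def dehomogenize (k : σ) : MvPolynomial σ R →ₐ[R] MvPolynomial σ R :=
  aeval (Function.update X k 1)

lemma dehomogenize_monomial (k : σ) (ν : σ →₀ ℕ) (r : R) :
    dehomogenize k (monomial ν r) = monomial (ν.erase k) r := by
  conv_lhs => rw [← Finsupp.erase_add_single k ν, monomial_add_single]
  rw [dehomogenize, map_mul, map_pow, aeval_X, Function.update_self, one_pow, mul_one,
    aeval_monomial, monomial_eq, algebraMap_eq]
  congr 1
  refine Finsupp.prod_congr fun j hj => ?_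
  rw [Function.update_of_ne (by rintro rfl; simp at hj)]

lemma aeval_update_zero_comp_shift_single (k : σ) :
    (aeval (Function.update X k 0)).comp (shift (Pi.single k 1)) = dehomogenize (R := R) k := by
  ext j : 1
  by_cases hj : j = k <;> simp [hj, shift, dehomogenize, Pi.single_apply]

lemma IsHomogeneous.coeff_erase_dehomogenize {S : MvPolynomial σ R} {n : ℕ}
    (hS : S.IsHomogeneous n) {ν : σ →₀ ℕ} (hν : ν.degree = n) (k : σ) :
    coeff (ν.erase k) (dehomogenize k S) = coeff ν S := by
  conv_lhs => rw [S.as_sum]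
  simp only [map_sum, dehomogenize_monomial, coeff_sum, coeff_monomial]
  rw [Finset.sum_eq_single ν (fun ν' hν' hne => if_neg fun heq => hne ?_) (by simp_all),
    if_pos rfl]
  have hdeg : ν'.degree = ν.degree :=
    hν ▸ not_not.mp fun h => mem_support_iff.mp hν' (hS.coeff_eq_zero h)
  have hk : ν' k = ν k := by
    have h' := Finsupp.degree_erase_add ν' k
    rw [heq, hdeg, ← Finsupp.degree_erase_add ν k] at h'
    omega
  rw [← Finsupp.erase_add_single k ν', heq, hk, Finsupp.erase_add_single]

lemma IsHomogeneous.add_le_of_le_order_shift_single {S : MvPolynomial σ R} {n c : ℕ}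
    (hS : S.IsHomogeneous n) {k : σ}
    (hc : (c : ℕ∞) ≤ (shift (Pi.single k 1) S : MvPowerSeries σ R).order)
    {ν : σ →₀ ℕ} (hν : coeff ν S ≠ 0) :
    c + ν k ≤ n := by
  have hdeg : ν.degree = n := not_not.mp fun h => hν (hS.coeff_eq_zero h)
  have hdehom : (c : ℕ∞) ≤ (dehomogenize k S : MvPowerSeries σ R).order := by
    rw [← aeval_update_zero_comp_shift_single, AlgHom.comp_apply]
    refine hc.trans (le_order_aeval (fun j => ?_) _)
    rcases eq_or_ne j k with rfl | hj
    · simpa using isHomogeneous_zero σ R 1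
    · simpa [hj] using isHomogeneous_X R j
  have hc_le : c ≤ (ν.erase k).degree := by
    by_contra! h
    apply hν
    rw [← hS.coeff_erase_dehomogenize hdeg k, ← coeff_coe]
    exact MvPowerSeries.coeff_of_lt_order ((Nat.cast_lt.mpr h).trans_le hdehom)
  have hsplit := Finsupp.degree_erase_add ν k
  omega

lemma IsHomogeneous.eq_zero_of_le_order_shift_single [Fintype σ] {S : MvPolynomial σ R}
    {n c : ℕ} (hS : S.IsHomogeneous n)
    (hnc : (Fintype.card σ - 1) * n < Fintype.card σ * c)
    (hc : ∀ k, (c : ℕ∞) ≤ (shift (Pi.single k 1) S : MvPowerSeries σ R).order) :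
    S = 0 := by
  by_contra hS0
  obtain ⟨ν, hν⟩ := ne_zero_iff.mp hS0
  have hsum : ∑ k, (c + ν k) ≤ ∑ _k : σ, n :=
    Finset.sum_le_sum fun k _ => hS.add_le_of_le_order_shift_single (hc k) hν
  have hdeg : ν.degree = n := not_not.mp fun h => hν (hS.coeff_eq_zero h)
  rw [Finset.sum_add_distrib, ← Finsupp.degree_eq_sum, hdeg] at hsum
  simp only [Finset.sum_const, Finset.card_univ, smul_eq_mul] at hsum
  rw [Nat.sub_one_mul] at hnc
  omega

end Dehomogenization

end MvPolynomial

open MvPolynomial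

lemma eval_mvHasseDeriv {F : Type*} [CommSemiring F] {m : ℕ} (a : Fin m → F) (i : Fin m → ℕ)
    (P : MvPolynomial (Fin m) F) :
    eval a (mvHasseDeriv i P) = coeff (Finsupp.equivFunOnFinite.symm i) (shift a P) := by
  rw [mvHasseDeriv, ← coeff_map, shift, aeval_def, algebraMap_eq,
    eval₂_comp_left (MvPolynomial.map (eval a))]
  congr 2
  · ext r
    simp
  · funext k
    simp [add_comm]

lemma mvMult_eq_order {F : Type*} [CommSemiring F] {m : ℕ} (P : MvPolynomial (Fin m) F)
    (a : Fin m → F) :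
    mvMult P a = (shift a P : MvPowerSeries (Fin m) F).order := by
  suffices h : ∀ M : ℕ∞, (∀ i : Fin m → ℕ, ((∑ k, i k : ℕ) : ℕ∞) < M →
      eval a (mvHasseDeriv i P) = 0) ↔ M ≤ (shift a P : MvPowerSeries (Fin m) F).order by
    simp only [mvMult, h]
    exact csSup_Iic
  intro M
  simp only [eval_mvHasseDeriv]
  constructor
  · intro h
    refine MvPowerSeries.le_order fun d hd => ?_
    simpa [coeff_coe, Finsupp.degree_eq_sum] using
      h d (by simpa [Finsupp.degree_eq_sum] using hd)
  · intro h i hi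
    rw [← coeff_coe]
    exact MvPowerSeries.coeff_of_lt_order
      (hi.trans_le h |>.trans_eq' (by simp [Finsupp.degree_eq_sum]))

theorem homogeneous_vanishing_on_basis_general {F : Type*} [Field F] {m : ℕ}
    (c j' : ℕ) (hcj : (m - 1) * j' < m * c)
    (R : MvPolynomial (Fin m) F) (hR : R.IsHomogeneous j')
    (b : Fin m → Fin m → F) (hb : LinearIndependent F b)
    (hmult : ∀ k, (c : ℕ∞) ≤ mvMult R (b k)) :
    R = 0 := by
  set A : Matrix (Fin m) (Fin m) F := (Matrix.of b)ᵀ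
  have hA : IsUnit A := Matrix.linearIndependent_cols_iff_isUnit.mp hb
  set S := bind₁ A.toMvPolynomial R
  have hS : S.IsHomogeneous j' := by
    simpa using hR.aeval _ A.toMvPolynomial_isHomogeneous
  have hSk (k : Fin m) :
      (c : ℕ∞) ≤ (shift (Pi.single k 1) S : MvPowerSeries (Fin m) F).order := by
    have hAk : A *ᵥ Pi.single k 1 = b k := by
      ext j
      simp [A]
    rw [← bind₁_toMvPolynomial_shift, hAk]
    exact ((hmult k).trans_eq (mvMult_eq_order R (b k))).trans
      (le_order_aeval A.toMvPolynomial_isHomogeneous _)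
  apply bind₁_toMvPolynomial_injective hA
  rw [map_zero]
  exact hS.eq_zero_of_le_order_shift_single (by simpa using hcj) hSk

/-- **Vanishing of low-degree homogeneous polynomials with high multiplicity at a basis.**
If `m ≥ 2`, `(m−1)·j' < m·c`, `R` is homogeneous of degree `j'`, and `R` vanishes with
multiplicity at least `c` at each of `m` linearly independent vectors, then `R = 0`. -/
theorem homogeneous_vanishing_on_basis {F : Type*} [Field F] {m : ℕ} (hm : 2 ≤ m)
    (c j' : ℕ) (hcj : (m - 1) * j' < m * c)
    (R : MvPolynomial (Fin m) F) (hR : R.IsHomogeneous j')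
    (b : Fin m → Fin m → F) (hb : LinearIndependent F b)
    (hmult : ∀ k, (c : ℕ∞) ≤ mvMult R (b k)) :
    R = 0 :=
  homogeneous_vanishing_on_basis_general c j' hcj R hR b hb hmult
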